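/- arXiv:1911.01065 — 2 statements merged into one kernel-verified Lean document; each statement's English description precedes it below -/
import Mathlib

section
/- Let H be an n×n symmetric positive definite matrix and let Y = (Y_{e^t})_{t∈ℤ} be an n-dimensional H-self-similar process. Define G = (G_t)_{t∈ℤ} by G_t = Σ_{k=1}^t e^{−kH} Δ_k Y_{e^k} for t ≥ 1, G_0 = 0, and G_t = −Σ_{k=t+1}^0 e^{−kH} Δ_k Y_{e^k} for t ≤ −1, where Δ_k Y_{e^k} = Y_{e^k} − Y_{e^{k−1}}. Then G has stationary increments, G_0 = 0, and the partial sums Σ_{k=l}^0 e^{kH} Δ_k G converge in probability to Y_1 as l → −∞; in particular G ∈ 𝒢_H. -/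
set_option autoImplicit false

open MeasureTheory Filter Finset Matrix Topology

variable {Ω : Type*}

/-- Two `ℤ`-indexed `ℝⁿ`-valued processes have the same finite-dimensional
distributions. -/
def SameFDD {n : ℕ} [MeasurableSpace Ω] (μ : Measure Ω)
    (X Y : ℤ → Ω → (Fin n → ℝ)) : Prop :=
  ∀ (m : ℕ) (t : Fin m → ℤ),
    μ.map (fun ω (i : Fin m) => X (t i) ω) = μ.map (fun ω (i : Fin m) => Y (t i) ω)

/-- Strict stationarity of a `ℤ`-indexed process. -/
def IsStationaryProcess {n : ℕ} [MeasurableSpace Ω] (μ : Measure Ω)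
    (X : ℤ → Ω → (Fin n → ℝ)) : Prop :=
  ∀ s : ℤ, SameFDD μ (fun t => X (t + s)) X

/-- Stationarity of increments of a `ℤ`-indexed process. -/
def HasStationaryIncrements {n : ℕ} [MeasurableSpace Ω] (μ : Measure Ω)
    (G : ℤ → Ω → (Fin n → ℝ)) : Prop :=
  ∀ s : ℤ, SameFDD μ (fun t ω => G (t + s) ω - G s ω) (fun t ω => G t ω - G 0 ω)

/-- The matrix exponential `e^{tH}` for an integer `t`. -/
noncomputable def zexp {n : ℕ} (H : Matrix (Fin n) (Fin n) ℝ) (t : ℤ) :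
    Matrix (Fin n) (Fin n) ℝ :=
  NormedSpace.exp ((t : ℝ) • H)

/-- The partial sum `Σ_{k=l}^0 e^{kH} Δ_k G`. -/
noncomputable def partialSumG {n : ℕ} (H : Matrix (Fin n) (Fin n) ℝ)
    (G : ℤ → Ω → (Fin n → ℝ)) (l : ℤ) (ω : Ω) : Fin n → ℝ :=
  ∑ k ∈ Finset.Icc l 0, (zexp H k).mulVec (G k ω - G (k - 1) ω)

/-- `G ∈ 𝒢_H` : `G` is a stationary-increment process starting from `0` whose partial
sums `Σ_{k=l}^0 e^{kH} Δ_k G` converge in probability as `l → −∞`. -/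
def MemG {n : ℕ} [MeasurableSpace Ω] (μ : Measure Ω) (H : Matrix (Fin n) (Fin n) ℝ)
    (G : ℤ → Ω → (Fin n → ℝ)) : Prop :=
  (∀ ω, G 0 ω = 0) ∧ HasStationaryIncrements μ G ∧
    ∃ ξ : Ω → (Fin n → ℝ), TendstoInMeasure μ (fun l => partialSumG H G l) Filter.atBot ξ

/-- `H`-self-similarity of a process `Y` indexed by `t ∈ ℤ`, where `Y t`
represents `Y_{e^t}`. -/
def IsSelfSimilar {n : ℕ} [MeasurableSpace Ω] (μ : Measure Ω)
    (H : Matrix (Fin n) (Fin n) ℝ) (Y : ℤ → Ω → (Fin n → ℝ)) : Prop :=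
  ∀ s : ℤ, SameFDD μ (fun t => Y (t + s)) (fun t ω => (zexp H s).mulVec (Y t ω))

/-!
Since `Δ_t G = e^{-tH} Δ_t Y`, the increment vector `(G_{t_i+s} - G_s)_i` is a fixed measurable
functional of the shifted path `(Y_{e^{j+s}})_j`, and `(G_{t_i} - G_0)_i` is the same functional of
the path `(e^{sH} Y_{e^j})_j`. Self-similarity says these two paths have the same
finite-dimensional distributions, hence (projective limits are unique) the same law on
`ℤ → ℝⁿ`, so the increments are stationary.

The partial sums `Σ_{k=l}^0 e^{kH} Δ_k G` telescope to `Y_1 - Y_{e^{l-1}}`, and `Y_{e^{l-1}}`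
has the law of `e^{(l-1)H} Y_1`, which tends to `0` in probability because `e^{tH} → 0` as
`t → -∞` for positive definite `H`.
-/

open ProbabilityTheory

namespace Matrix

variable {m : Type*} [Fintype m] [DecidableEq m]

lemma continuous_conjStarAlgAut (u : unitary (Matrix m m ℝ)) :
    Continuous (Unitary.conjStarAlgAut ℝ (Matrix m m ℝ) u) :=
  ((continuous_const.matrix_mul continuous_id).matrix_mul continuous_const).congr
    fun x => (Unitary.conjStarAlgAut_apply u x).symm

lemma exp_conjStarAlgAut (u : unitary (Matrix m m ℝ)) (A : Matrix m m ℝ) :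
    NormedSpace.exp (Unitary.conjStarAlgAut ℝ _ u A) =
      Unitary.conjStarAlgAut ℝ _ u (NormedSpace.exp A) := by
  simpa using exp_units_conj (Unitary.toUnits u) A

lemma IsHermitian.exp_smul_eq {H : Matrix m m ℝ} (hH : H.IsHermitian) (t : ℝ) :
    NormedSpace.exp (t • H) = Unitary.conjStarAlgAut ℝ _ hH.eigenvectorUnitary
      (diagonal fun i => Real.exp (t * hH.eigenvalues i)) := by
  conv_lhs => rw [hH.spectral_theorem]
  rw [← map_smul, exp_conjStarAlgAut, ← diagonal_smul, exp_diagonal]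
  congr 2
  ext i
  simp [Real.exp_eq_exp_ℝ]

lemma PosDef.tendsto_exp_smul_atBot {H : Matrix m m ℝ} (hH : H.PosDef) :
    Tendsto (fun t : ℝ => NormedSpace.exp (t • H)) atBot (𝓝 0) := by
  simp_rw [hH.1.exp_smul_eq]
  rw [← map_zero (Unitary.conjStarAlgAut ℝ (Matrix m m ℝ) hH.1.eigenvectorUnitary),
    ← diagonal_zero]
  refine ((continuous_conjStarAlgAut _).tendsto _).comp
    ((continuous_id.matrix_diagonal.tendsto _).comp (tendsto_pi_nhds.2 fun i => ?_))
  exact Real.tendsto_exp_atBot.comp (tendsto_id.atBot_mul_const (hH.eigenvalues_pos i))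

end Matrix

section zexp

variable {n : ℕ} (H : Matrix (Fin n) (Fin n) ℝ)

@[simp]
lemma zexp_zero : zexp H 0 = 1 := by
  simp [zexp]

lemma zexp_add (a b : ℤ) : zexp H (a + b) = zexp H a * zexp H b := by
  rw [zexp, zexp, zexp, ← Matrix.exp_add_of_commute _ _
    (((Commute.refl H).smul_left _).smul_right _), Int.cast_add, add_smul]

lemma zexp_mulVec_zexp_mulVec (a b : ℤ) (v : Fin n → ℝ) :
    zexp H a *ᵥ (zexp H b *ᵥ v) = zexp H (a + b) *ᵥ v := by
  rw [mulVec_mulVec, zexp_add]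

lemma Measurable.zexp_mulVec {α : Type*} [MeasurableSpace α] {f : α → Fin n → ℝ}
    (hf : Measurable f) (t : ℤ) : Measurable fun a => zexp H t *ᵥ f a :=
  (continuous_const.matrix_mulVec continuous_id).measurable.comp hf

variable {H} in
lemma tendsto_zexp_atBot (hH : H.PosDef) : Tendsto (zexp H) atBot (𝓝 0) :=
  hH.tendsto_exp_smul_atBot.comp (tendsto_intCast_atBot_iff.mpr tendsto_id)

end zexp

section intervalSum

variable {E : Type*} [AddCommGroup E]

/-- The discrete integral of `f` from `0` to `t`; in the statement `G t = intervalSum g t` with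
`g k = e^{-kH} Δ_k Y`. -/
noncomputable def intervalSum (f : ℤ → E) (t : ℤ) : E :=
  ∑ k ∈ Icc 1 t, f k - ∑ k ∈ Icc (t + 1) 0, f k

@[simp]
lemma intervalSum_zero (f : ℤ → E) : intervalSum f 0 = 0 := by
  simp [intervalSum]

lemma intervalSum_sub_intervalSum_sub_one (f : ℤ → E) (t : ℤ) :
    intervalSum f t - intervalSum f (t - 1) = f t := by
  unfold intervalSum
  rw [sub_add_cancel]
  rcases le_or_gt 1 t with ht | ht
  · rw [← insert_Icc_sub_one_right_eq_Icc ht, sum_insert (by simp),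
      Icc_eq_empty (by omega : ¬t + 1 ≤ 0), Icc_eq_empty (by omega : ¬t ≤ 0)]
    abel
  · rw [← insert_Icc_add_one_left_eq_Icc (by omega : t ≤ 0), sum_insert (by simp),
      Icc_eq_empty (by omega : ¬1 ≤ t), Icc_eq_empty (by omega : ¬1 ≤ t - 1)]
    abel

lemma eq_intervalSum_of_sub_eq {F f : ℤ → E} (h0 : F 0 = 0) (hF : ∀ t, F t - F (t - 1) = f t)
    (t : ℤ) : F t = intervalSum f t := by
  induction t using Int.induction_on with
  | zero => rw [h0, intervalSum_zero]
  | succ k ih =>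
    have hF' := hF (k + 1)
    have hf := intervalSum_sub_intervalSum_sub_one f (k + 1)
    rw [add_sub_cancel_right] at hF' hf
    rw [← sub_add_cancel (F _) (F k), hF', ih, ← hf, sub_add_cancel]
  | pred k ih =>
    rw [← sub_sub_cancel (F (-k)) (F _), hF, ih, ← intervalSum_sub_intervalSum_sub_one f (-k),
      sub_sub_cancel]

lemma eq_intervalSum_of_eq_sum {F f : ℤ → E} (hpos : ∀ t, 1 ≤ t → F t = ∑ k ∈ Icc 1 t, f k)
    (h0 : F 0 = 0) (hneg : ∀ t, t ≤ -1 → F t = -∑ k ∈ Icc (t + 1) 0, f k) (t : ℤ) :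
    F t = intervalSum f t := by
  rcases lt_trichotomy t 0 with ht | rfl | ht
  · simp [hneg t (by omega), intervalSum, Icc_eq_empty (by omega : ¬1 ≤ t)]
  · rw [h0, intervalSum_zero]
  · simp [hpos t ht, intervalSum, Icc_eq_empty (by omega : ¬t + 1 ≤ 0)]

lemma intervalSum_sub_eq (g : ℤ → E) (t : ℤ) :
    intervalSum (fun k => g k - g (k - 1)) t = g t - g 0 :=
  (eq_intervalSum_of_sub_eq (F := fun t => g t - g 0) (sub_self _)
    (fun _ => sub_sub_sub_cancel_right _ _ _) t).symm

lemma sub_eq_intervalSum (F : ℤ → E) (s t : ℤ) :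
    F (t + s) - F s = intervalSum (fun j => F (j + s) - F (j - 1 + s)) t := by
  simpa using (intervalSum_sub_eq (fun j => F (j + s)) t).symm

lemma sum_Icc_eq_neg_intervalSum (f : ℤ → E) {l : ℤ} (hl : l ≤ 0) :
    ∑ k ∈ Icc l 0, f k = -intervalSum f (l - 1) := by
  simp [intervalSum, Icc_eq_empty (by omega : ¬1 ≤ l - 1)]

end intervalSum

section Laws

variable [MeasurableSpace Ω] {μ : Measure Ω} {n : ℕ}

lemma SameFDD.map_pi_eq {X Y : ℤ → Ω → (Fin n → ℝ)} (h : SameFDD μ X Y)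
    (hX : ∀ t, Measurable (X t)) (hY : ∀ t, Measurable (Y t)) {ι : Type*} [Fintype ι]
    (t : ι → ℤ) : μ.map (fun ω i => X (t i) ω) = μ.map (fun ω i => Y (t i) ω) := by
  let e := Fintype.equivFin ι
  have hreindex : Measurable fun (g : Fin (Fintype.card ι) → Fin n → ℝ) (i : ι) => g (e i) :=
    measurable_pi_lambda _ fun i => measurable_pi_apply _
  have key := congrArg (Measure.map fun (g : Fin (Fintype.card ι) → Fin n → ℝ) (i : ι) => g (e i))
    (h _ (t ∘ e.symm))
  rw [Measure.map_map hreindex (measurable_pi_lambda _ fun _ => hX _),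
    Measure.map_map hreindex (measurable_pi_lambda _ fun _ => hY _)] at key
  simpa [Function.comp_def] using key

lemma SameFDD.map_eq [IsFiniteMeasure μ] {X Y : ℤ → Ω → (Fin n → ℝ)} (h : SameFDD μ X Y)
    (hX : ∀ t, Measurable (X t)) (hY : ∀ t, Measurable (Y t)) :
    μ.map (fun ω t => X t ω) = μ.map (fun ω t => Y t ω) := by
  have hlim : ∀ Z : ℤ → Ω → (Fin n → ℝ), (∀ t, Measurable (Z t)) →
      IsProjectiveLimit (μ.map fun ω t => Z t ω) fun I : Finset ℤ => μ.map fun ω (j : I) => Z j ω :=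
    fun Z hZ I => by
      rw [Measure.map_map (Finset.measurable_restrict I) (measurable_pi_lambda _ hZ)]
      rfl
  refine (hlim X hX).unique ?_
  simpa only [h.map_pi_eq hX hY] using hlim Y hY

variable [IsFiniteMeasure μ] {H : Matrix (Fin n) (Fin n) ℝ} {Y : ℤ → Ω → (Fin n → ℝ)}

lemma IsSelfSimilar.map_shift_eq (hY : IsSelfSimilar μ H Y) (hmeas : ∀ t, Measurable (Y t))
    (s : ℤ) : μ.map (fun ω t => Y (t + s) ω) = μ.map (fun ω t => zexp H s *ᵥ Y t ω) :=
  (hY s).map_eq (fun _ => hmeas _) fun t => (hmeas t).zexp_mulVec H s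

lemma IsSelfSimilar.identDistrib (hY : IsSelfSimilar μ H Y) (hmeas : ∀ t, Measurable (Y t))
    (s : ℤ) : IdentDistrib (Y s) (fun ω => zexp H s *ᵥ Y 0 ω) μ μ where
  aemeasurable_fst := (hmeas s).aemeasurable
  aemeasurable_snd := ((hmeas 0).zexp_mulVec H s).aemeasurable
  map_eq := by
    have key := congrArg (Measure.map fun f : ℤ → Fin n → ℝ => f 0) (hY.map_shift_eq hmeas s)
    rw [Measure.map_map (measurable_pi_apply 0) (measurable_pi_lambda _ fun _ => hmeas _),
      Measure.map_map (measurable_pi_apply 0)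
        (measurable_pi_lambda _ fun t => (hmeas t).zexp_mulVec H s)] at key
    simpa [Function.comp_def] using key

end Laws

section ConvergenceInMeasure

variable [MeasurableSpace Ω] {μ : Measure Ω} {ι : Type*} {l : Filter ι}

lemma tendstoInMeasure_of_tendsto_ae_of_isCountablyGenerated [l.IsCountablyGenerated]
    [IsFiniteMeasure μ] {E : Type*} [MetricSpace E] {f : ι → Ω → E} {g : Ω → E}
    (hf : ∀ i, AEStronglyMeasurable (f i) μ)
    (hfg : ∀ᵐ ω ∂μ, Tendsto (fun i => f i ω) l (𝓝 (g ω))) : TendstoInMeasure μ f l g :=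
  fun ε hε => tendsto_of_seq_tendsto fun u hu =>
    tendstoInMeasure_of_tendsto_ae (fun k => hf (u k)) (hfg.mono fun _ hω => hω.comp hu) ε hε

lemma TendstoInMeasure.of_identDistrib {E : Type*} [PseudoEMetricSpace E] [MeasurableSpace E]
    [OpensMeasurableSpace E] {f g : ι → Ω → E} {c : E} (hfg : ∀ i, IdentDistrib (f i) (g i) μ μ)
    (hg : TendstoInMeasure μ g l fun _ => c) : TendstoInMeasure μ f l fun _ => c := by
  intro ε hε
  have hclosed : MeasurableSet {v : E | ε ≤ edist v c} :=
    (isClosed_le continuous_const (continuous_id.edist continuous_const)).measurableSet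
  exact (hg ε hε).congr fun i => ((hfg i).measure_mem_eq hclosed).symm

lemma tendstoInMeasure_mulVec [l.IsCountablyGenerated] [IsFiniteMeasure μ]
    {m p : Type*} [Fintype m] [Fintype p] {A : ι → Matrix m p ℝ} (hA : Tendsto A l (𝓝 0))
    {X : Ω → p → ℝ} (hX : Measurable X) :
    TendstoInMeasure μ (fun i ω => A i *ᵥ X ω) l 0 := by
  refine tendstoInMeasure_of_tendsto_ae_of_isCountablyGenerated
    (fun i => ((continuous_const.matrix_mulVec continuous_id).measurable.comp hX)
      |>.aestronglyMeasurable) (ae_of_all _ fun ω => ?_)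
  simpa [Function.comp_def] using
    ((continuous_id.matrix_mulVec continuous_const).tendsto' 0 (0 *ᵥ X ω) rfl).comp hA

end ConvergenceInMeasure

section SelfSimilarIncrements

variable {n : ℕ} {H : Matrix (Fin n) (Fin n) ℝ} {Y G : ℤ → Ω → (Fin n → ℝ)}

lemma partialSumG_eq_sub
    (hG : ∀ t ω, G t ω - G (t - 1) ω = zexp H (-t) *ᵥ (Y t ω - Y (t - 1) ω))
    {l : ℤ} (hl : l ≤ 0) (ω : Ω) : partialSumG H G l ω = Y 0 ω - Y (l - 1) ω := by
  simp only [partialSumG, hG, zexp_mulVec_zexp_mulVec, add_neg_cancel, zexp_zero, one_mulVec]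
  rw [sum_Icc_eq_neg_intervalSum _ hl, intervalSum_sub_eq, neg_sub]

variable [MeasurableSpace Ω] {μ : Measure Ω} [IsFiniteMeasure μ]

theorem hasStationaryIncrements_of_selfSimilar (hmeas : ∀ t, Measurable (Y t))
    (hY : IsSelfSimilar μ H Y)
    (hG : ∀ t ω, G t ω - G (t - 1) ω = zexp H (-t) *ᵥ (Y t ω - Y (t - 1) ω)) :
    HasStationaryIncrements μ G := by
  intro s m t
  let Φ : (ℤ → Fin n → ℝ) → Fin m → Fin n → ℝ := fun f i =>
    intervalSum (fun j => zexp H (-(j + s)) *ᵥ (f j - f (j - 1))) (t i)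
  have hΦ : Measurable Φ := by
    refine Continuous.measurable ?_
    unfold Φ intervalSum
    fun_prop
  have hshift : (fun ω i => G (t i + s) ω - G s ω) = Φ ∘ fun ω j => Y (j + s) ω := by
    ext ω i : 2
    simp only [Φ, Function.comp_apply, sub_eq_intervalSum fun j => G j ω, hG, sub_add_eq_add_sub,
      neg_add]
  have hscale : (fun ω i => G (t i) ω - G 0 ω) = Φ ∘ fun ω j => zexp H s *ᵥ Y j ω := by
    ext ω i : 2
    simp only [Φ, Function.comp_apply, ← mulVec_sub, zexp_mulVec_zexp_mulVec, neg_add,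
      neg_add_cancel_right]
    simpa [hG] using sub_eq_intervalSum (fun j => G j ω) 0 (t i)
  rw [hshift, hscale, ← Measure.map_map hΦ (measurable_pi_lambda _ fun _ => hmeas _),
    ← Measure.map_map hΦ (measurable_pi_lambda _ fun t => (hmeas t).zexp_mulVec H s),
    hY.map_shift_eq hmeas s]

theorem tendstoInMeasure_partialSumG (hH : H.PosDef) (hmeas : ∀ t, Measurable (Y t))
    (hY : IsSelfSimilar μ H Y)
    (hG : ∀ t ω, G t ω - G (t - 1) ω = zexp H (-t) *ᵥ (Y t ω - Y (t - 1) ω)) :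
    TendstoInMeasure μ (fun l => partialSumG H G l) atBot (Y 0) := by
  have hpred : Tendsto (fun l : ℤ => l - 1) atBot atBot :=
    tendsto_atBot_add_const_right _ (-1) tendsto_id
  have hsmall : TendstoInMeasure μ (fun l => Y (l - 1)) atBot fun _ => 0 :=
    TendstoInMeasure.of_identDistrib (fun l => hY.identDistrib hmeas (l - 1))
      (tendstoInMeasure_mulVec ((tendsto_zexp_atBot hH).comp hpred) (hmeas 0))
  rw [tendstoInMeasure_iff_norm] at hsmall ⊢
  refine fun ε hε => (hsmall ε hε).congr' ?_
  filter_upwards [eventually_le_atBot 0] with l hl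
  simp [partialSumG_eq_sub hG hl]

end SelfSimilarIncrements

/-- given an `H`-self-similar process `Y` (with `Y t` representing
`Y_{e^t}`), the process `G` defined by `G_t = Σ_{k=1}^t e^{−kH} Δ_k Y_{e^k}` for
`t ≥ 1`, `G_0 = 0` and `G_t = −Σ_{k=t+1}^0 e^{−kH} Δ_k Y_{e^k}` for `t ≤ −1`
has stationary increments, starts from `0`, and its partial sums
`Σ_{k=l}^0 e^{kH} Δ_k G` converge in probability to `Y_{e^0} = Y_1` as `l → −∞`;
in particular `G ∈ 𝒢_H`. -/
theorem stmt3 {n : ℕ} [MeasurableSpace Ω] (μ : Measure Ω) [IsProbabilityMeasure μ]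
    (H : Matrix (Fin n) (Fin n) ℝ) (hH : H.PosDef)
    (Y : ℤ → Ω → (Fin n → ℝ)) (hmeas : ∀ t, Measurable (Y t))
    (hY : IsSelfSimilar μ H Y)
    (G : ℤ → Ω → (Fin n → ℝ))
    (hGpos : ∀ t : ℤ, 1 ≤ t → ∀ ω,
      G t ω = ∑ k ∈ Finset.Icc 1 t, (zexp H (-k)).mulVec (Y k ω - Y (k - 1) ω))
    (hG0 : ∀ ω, G 0 ω = 0)
    (hGneg : ∀ t : ℤ, t ≤ -1 → ∀ ω,
      G t ω = -∑ k ∈ Finset.Icc (t + 1) 0, (zexp H (-k)).mulVec (Y k ω - Y (k - 1) ω)) :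
    HasStationaryIncrements μ G ∧ (∀ ω, G 0 ω = 0) ∧
      TendstoInMeasure μ (fun l => partialSumG H G l) Filter.atBot (Y 0) ∧
      MemG μ H G := by
  have hG : ∀ t ω, G t ω - G (t - 1) ω = zexp H (-t) *ᵥ (Y t ω - Y (t - 1) ω) := fun t ω => by
    simp only [eq_intervalSum_of_eq_sum (fun t ht => hGpos t ht ω) (hG0 ω)
      (fun t ht => hGneg t ht ω), intervalSum_sub_intervalSum_sub_one]
  have hstat := hasStationaryIncrements_of_selfSimilar hmeas hY hG
  have hconv := tendstoInMeasure_partialSumG hH hmeas hY hG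
  exact ⟨hstat, hG0, hconv, hG0, hstat, Y 0, hconv⟩
end

section
/- Let H be an n×n symmetric positive definite matrix and let X = (X_t)_{t∈ℝ} be a centred, square-integrable strictly stationary n-dimensional process with continuous paths almost surely, with autocovariance γ(t) = E[X_t X_0ᵀ] (so E[X_t X_sᵀ] = γ(t−s)). Define G = (G_t)_{t∈ℝ} by G_t = X_t − X_0 + H ∫_0^t X_s ds (pathwise Riemann integral, with the usual sign convention for t < 0), and for δ > 0 define Δ_t^δ G = G_t − G_{t−δ} and r_δ(t) = E[(Δ_t^δ G)(Δ_0^δ G)ᵀ]. Then for every t ∈ ℝ and δ > 0: r_δ(t) = 2γ(t) − γ(t+δ) − γ(t−δ) + (∫_t^{t+δ} γ(s) ds − ∫_{t−δ}^t γ(s) ds) H + H (∫_{t−δ}^t γ(s) ds − ∫_t^{t+δ} γ(s) ds) + H (∫_{t−δ}^t (s−t+δ) γ(s) ds + ∫_t^{t+δ} (t−s+δ) γ(s) ds) H. -/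
set_option autoImplicit false

open MeasureTheory Filter Finset Matrix Topology

variable {Ω : Type*}

/-- Two `ℝ`-indexed `ℝⁿ`-valued processes have the same finite-dimensional
distributions. -/
def SameFDDR {n : ℕ} [MeasurableSpace Ω] (μ : Measure Ω)
    (X Y : ℝ → Ω → (Fin n → ℝ)) : Prop :=
  ∀ (m : ℕ) (t : Fin m → ℝ),
    μ.map (fun ω (i : Fin m) => X (t i) ω) = μ.map (fun ω (i : Fin m) => Y (t i) ω)

/-- Strict stationarity of an `ℝ`-indexed process. -/
def IsStationaryR {n : ℕ} [MeasurableSpace Ω] (μ : Measure Ω)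
    (X : ℝ → Ω → (Fin n → ℝ)) : Prop :=
  ∀ s : ℝ, SameFDDR μ (fun t => X (t + s)) X


/-!
Replace `X` by a modification `Y` whose paths are all continuous: it has the same second
moments and almost surely the same increments of `G`, namely
`Δ_t^δ G = Y_t − Y_{t−δ} + H ∫_{t−δ}^t Y`. By bilinearity of `(U, V) ↦ E[U Vᵀ]` the cross
moment of two such increments splits into four terms, and Fubini's theorem (justified by the
uniform bound `E[Y_s Y_sᵀ] = γ 0`) turns each into an integral of `γ`. The double integral
`∫_{t−δ}^t ∫_s^{s+δ} γ` becomes a single integral against the triangle kernel `δ − |u − t|`,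
the length of the set of windows `(s, s + δ]` with `s ∈ (t − δ, t]` that contain `u`.
-/

section Fubini

variable [MeasurableSpace Ω] {μ : Measure Ω} [SFinite μ]
  {T T₁ T₂ : Type*} [MeasurableSpace T] [MeasurableSpace T₁] [MeasurableSpace T₂]

theorem memLp_uncurry_of_integral_sq_le (ν : Measure T) [IsFiniteMeasure ν] {F : T → Ω → ℝ}
    (hF : Measurable (Function.uncurry F)) (hF2 : ∀ s, MemLp (F s) 2 μ) {C : ℝ}
    (hC : ∀ s, ∫ ω, F s ω ^ 2 ∂μ ≤ C) :
    MemLp (Function.uncurry F) 2 (ν.prod μ) := by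
  have hsq : Measurable fun p : T × Ω => Function.uncurry F p ^ 2 := hF.pow_const 2
  refine (memLp_two_iff_integrable_sq hF.aestronglyMeasurable).2 <|
    (integrable_prod_iff hsq.aestronglyMeasurable).2
      ⟨ae_of_all _ fun s => (hF2 s).integrable_sq, ?_⟩
  refine Integrable.of_bound (hsq.norm.stronglyMeasurable.integral_prod_right'.aestronglyMeasurable)
    C (ae_of_all _ fun s => ?_)
  simp only [Function.uncurry_apply_pair, norm_pow, Real.norm_eq_abs, sq_abs]
  rw [abs_of_nonneg (integral_nonneg fun _ => sq_nonneg _)]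
  exact hC s

variable (ν₁ : Measure T₁) (ν₂ : Measure T₂) [IsFiniteMeasure ν₁] [IsFiniteMeasure ν₂]
  {F₁ : T₁ → Ω → ℝ} {F₂ : T₂ → Ω → ℝ} {C₁ C₂ : ℝ}

theorem integrable_prod_mul_of_integral_sq_le
    (hF₁ : Measurable (Function.uncurry F₁)) (hF₂ : Measurable (Function.uncurry F₂))
    (hF₁2 : ∀ s, MemLp (F₁ s) 2 μ) (hF₂2 : ∀ s, MemLp (F₂ s) 2 μ)
    (hC₁ : ∀ s, ∫ ω, F₁ s ω ^ 2 ∂μ ≤ C₁) (hC₂ : ∀ s, ∫ ω, F₂ s ω ^ 2 ∂μ ≤ C₂) :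
    Integrable (fun p : (T₁ × T₂) × Ω => F₁ p.1.1 p.2 * F₂ p.1.2 p.2) ((ν₁.prod ν₂).prod μ) :=
  (memLp_uncurry_of_integral_sq_le (ν₁.prod ν₂) (F := fun y => F₁ y.1)
      (hF₁.comp (measurable_fst.fst.prodMk measurable_snd)) (hF₁2 ·.1) (hC₁ ·.1)).integrable_mul
    (memLp_uncurry_of_integral_sq_le (ν₁.prod ν₂) (F := fun y => F₂ y.2)
      (hF₂.comp (measurable_fst.snd.prodMk measurable_snd)) (hF₂2 ·.2) (hC₂ ·.2))

theorem integrable_integral_mul_integral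
    (hF₁ : Measurable (Function.uncurry F₁)) (hF₂ : Measurable (Function.uncurry F₂))
    (hF₁2 : ∀ s, MemLp (F₁ s) 2 μ) (hF₂2 : ∀ s, MemLp (F₂ s) 2 μ)
    (hC₁ : ∀ s, ∫ ω, F₁ s ω ^ 2 ∂μ ≤ C₁) (hC₂ : ∀ s, ∫ ω, F₂ s ω ^ 2 ∂μ ≤ C₂) :
    Integrable (fun ω => (∫ s, F₁ s ω ∂ν₁) * ∫ v, F₂ v ω ∂ν₂) μ := by
  simp_rw [← integral_prod_mul]
  exact (integrable_prod_mul_of_integral_sq_le ν₁ ν₂ hF₁ hF₂ hF₁2 hF₂2 hC₁ hC₂).integral_prod_right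

theorem integral_integral_mul_integral
    (hF₁ : Measurable (Function.uncurry F₁)) (hF₂ : Measurable (Function.uncurry F₂))
    (hF₁2 : ∀ s, MemLp (F₁ s) 2 μ) (hF₂2 : ∀ s, MemLp (F₂ s) 2 μ)
    (hC₁ : ∀ s, ∫ ω, F₁ s ω ^ 2 ∂μ ≤ C₁) (hC₂ : ∀ s, ∫ ω, F₂ s ω ^ 2 ∂μ ≤ C₂) :
    ∫ ω, (∫ s, F₁ s ω ∂ν₁) * (∫ v, F₂ v ω ∂ν₂) ∂μ = ∫ s, ∫ v, ∫ ω, F₁ s ω * F₂ v ω ∂μ ∂ν₂ ∂ν₁ := by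
  have h := integrable_prod_mul_of_integral_sq_le ν₁ ν₂ hF₁ hF₂ hF₁2 hF₂2 hC₁ hC₂
  simp_rw [← integral_prod_mul]
  rw [← integral_integral_swap h, integral_prod _ h.integral_prod_left]

theorem memLp_two_integral (ν : Measure T) [IsFiniteMeasure ν] {F : T → Ω → ℝ}
    (hF : Measurable (Function.uncurry F)) (hF2 : ∀ s, MemLp (F s) 2 μ) {C : ℝ}
    (hC : ∀ s, ∫ ω, F s ω ^ 2 ∂μ ≤ C) :
    MemLp (fun ω => ∫ s, F s ω ∂ν) 2 μ :=
  (memLp_two_iff_integrable_sq hF.stronglyMeasurable.integral_prod_left.aestronglyMeasurable).2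
    (by simpa only [sq] using integrable_integral_mul_integral ν ν hF hF hF2 hF2 hC hC)

end Fubini

section CrossMoment

variable [MeasurableSpace Ω] {μ : Measure Ω} {ι κ ι' κ' : Type*}

noncomputable def crossMoment (μ : Measure Ω) (U : Ω → ι → ℝ) (V : Ω → κ → ℝ) : Matrix ι κ ℝ :=
  Matrix.of fun i j => ∫ ω, U ω i * V ω j ∂μ

theorem crossMoment_congr_ae {U U' : Ω → ι → ℝ} {V V' : Ω → κ → ℝ} (hU : U =ᵐ[μ] U')
    (hV : V =ᵐ[μ] V') : crossMoment μ U V = crossMoment μ U' V' := by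
  ext i j
  refine integral_congr_ae ?_
  filter_upwards [hU, hV] with ω hUω hVω
  rw [hUω, hVω]

variable [Fintype ι] [Fintype κ]

theorem MeasureTheory.MemLp.const_mulVec [Fintype ι'] {U : Ω → ι → ℝ} (hU : MemLp U 2 μ)
    (A : Matrix ι' ι ℝ) :
    MemLp (fun ω => A *ᵥ U ω) 2 μ :=
  memLp_pi_iff.2 fun i => memLp_finsetSum _ fun k _ => (hU.eval k).const_mul (A i k)

variable {U U₁ U₂ : Ω → ι → ℝ} {V V₁ V₂ : Ω → κ → ℝ}

theorem MeasureTheory.MemLp.integrable_mul_apply (hU : MemLp U 2 μ) (hV : MemLp V 2 μ)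
    (i : ι) (j : κ) :
    Integrable (fun ω => U ω i * V ω j) μ :=
  (hU.eval i).integrable_mul (hV.eval j)

theorem crossMoment_add_left (hU₁ : MemLp U₁ 2 μ) (hU₂ : MemLp U₂ 2 μ) (hV : MemLp V 2 μ) :
    crossMoment μ (U₁ + U₂) V = crossMoment μ U₁ V + crossMoment μ U₂ V := by
  ext i j
  simp only [crossMoment, Matrix.add_apply, Matrix.of_apply, Pi.add_apply, add_mul]
  exact integral_add (hU₁.integrable_mul_apply hV i j) (hU₂.integrable_mul_apply hV i j)

theorem crossMoment_sub_left (hU₁ : MemLp U₁ 2 μ) (hU₂ : MemLp U₂ 2 μ) (hV : MemLp V 2 μ) :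
    crossMoment μ (U₁ - U₂) V = crossMoment μ U₁ V - crossMoment μ U₂ V := by
  ext i j
  simp only [crossMoment, Matrix.sub_apply, Matrix.of_apply, Pi.sub_apply, sub_mul]
  exact integral_sub (hU₁.integrable_mul_apply hV i j) (hU₂.integrable_mul_apply hV i j)

theorem crossMoment_add_right (hU : MemLp U 2 μ) (hV₁ : MemLp V₁ 2 μ) (hV₂ : MemLp V₂ 2 μ) :
    crossMoment μ U (V₁ + V₂) = crossMoment μ U V₁ + crossMoment μ U V₂ := by
  ext i j
  simp only [crossMoment, Matrix.add_apply, Matrix.of_apply, Pi.add_apply, mul_add]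
  exact integral_add (hU.integrable_mul_apply hV₁ i j) (hU.integrable_mul_apply hV₂ i j)

theorem crossMoment_sub_right (hU : MemLp U 2 μ) (hV₁ : MemLp V₁ 2 μ) (hV₂ : MemLp V₂ 2 μ) :
    crossMoment μ U (V₁ - V₂) = crossMoment μ U V₁ - crossMoment μ U V₂ := by
  ext i j
  simp only [crossMoment, Matrix.sub_apply, Matrix.of_apply, Pi.sub_apply, mul_sub]
  exact integral_sub (hU.integrable_mul_apply hV₁ i j) (hU.integrable_mul_apply hV₂ i j)

theorem crossMoment_mulVec_left [Fintype ι'] (hU : MemLp U 2 μ) (hV : MemLp V 2 μ)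
    (A : Matrix ι' ι ℝ) :
    crossMoment μ (fun ω => A *ᵥ U ω) V = A * crossMoment μ U V := by
  ext i j
  simp only [crossMoment, Matrix.mul_apply, Matrix.of_apply, Matrix.mulVec, dotProduct,
    Finset.sum_mul, mul_assoc]
  rw [integral_finsetSum _ fun k _ => (hU.integrable_mul_apply hV k j).const_mul _]
  simp only [integral_const_mul]

theorem crossMoment_mulVec_right [Fintype κ'] (hU : MemLp U 2 μ) (hV : MemLp V 2 μ)
    (B : Matrix κ' κ ℝ) :
    crossMoment μ U (fun ω => B *ᵥ V ω) = crossMoment μ U V * Bᵀ := by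
  ext i j
  simp only [crossMoment, Matrix.mul_apply, Matrix.of_apply, Matrix.mulVec, dotProduct,
    Finset.mul_sum, Matrix.transpose_apply, mul_left_comm _ (B _ _), mul_comm _ (B _ _)]
  rw [integral_finsetSum _ fun k _ => (hU.integrable_mul_apply hV i k).const_mul _]
  simp only [integral_const_mul]

end CrossMoment

section IntegratedProcess

variable [MeasurableSpace Ω] {μ : Measure Ω} [SFinite μ] {ι : Type*} [Fintype ι]
  {T : Type*} [MeasurableSpace T] {Y : T → Ω → ι → ℝ} {C : ι → ℝ}

theorem memLp_two_integral_pi (ν : Measure T) [IsFiniteMeasure ν]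
    (hY : Measurable (Function.uncurry Y)) (hY2 : ∀ s, MemLp (Y s) 2 μ)
    (hC : ∀ s i, ∫ ω, Y s ω i ^ 2 ∂μ ≤ C i) :
    MemLp (fun ω i => ∫ s, Y s ω i ∂ν) 2 μ :=
  memLp_pi_iff.2 fun i =>
    memLp_two_integral ν ((measurable_pi_apply i).comp hY) (fun s => (hY2 s).eval i) (hC · i)

theorem crossMoment_integral_integral (ν₁ ν₂ : Measure T) [IsFiniteMeasure ν₁] [IsFiniteMeasure ν₂]
    (hY : Measurable (Function.uncurry Y)) (hY2 : ∀ s, MemLp (Y s) 2 μ)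
    (hC : ∀ s i, ∫ ω, Y s ω i ^ 2 ∂μ ≤ C i) :
    crossMoment μ (fun ω i => ∫ s, Y s ω i ∂ν₁) (fun ω j => ∫ v, Y v ω j ∂ν₂) =
      Matrix.of fun i j => ∫ s, ∫ v, crossMoment μ (Y s) (Y v) i j ∂ν₂ ∂ν₁ := by
  ext i j
  exact integral_integral_mul_integral ν₁ ν₂ ((measurable_pi_apply i).comp hY)
    ((measurable_pi_apply j).comp hY) (fun s => (hY2 s).eval i) (fun s => (hY2 s).eval j)
    (hC · i) (hC · j)

end IntegratedProcess

section Window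

open Set

theorem setIntegral_window_integral {g : ℝ → ℝ} (hg : Measurable g) {a b δ : ℝ} (hδ : 0 ≤ δ)
    (hgi : IntegrableOn g (Ioc a (b + δ))) :
    ∫ s in Ioc a b, ∫ u in s..s + δ, g u =
      ∫ u in Ioc a (b + δ), volume.real (Ioc a b ∩ Ico (u - δ) u) * g u := by
  set F : ℝ → ℝ → ℝ := fun s u => (Ioc s (s + δ)).indicator g u
  have hF_eq : ∀ s u, F s u = (Ico (u - δ) u).indicator (fun _ => g u) s := by
    intro s u
    simp only [F, indicator_apply, Set.mem_Ioc, Set.mem_Ico]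
    exact if_congr ⟨fun h => ⟨by linarith [h.2], h.1⟩, fun h => ⟨h.2, by linarith [h.1]⟩⟩ rfl rfl
  have hFm : Measurable (Function.uncurry F) :=
    (hg.comp measurable_snd).indicator ((measurableSet_lt measurable_fst measurable_snd).inter
      (measurableSet_le measurable_snd (measurable_fst.add_const δ)))
  have hFi : Integrable (Function.uncurry F)
      ((volume.restrict (Ioc a b)).prod (volume.restrict (Ioc a (b + δ)))) := by
    refine (((integrable_const (1 : ℝ)).mul_prod hgi).norm).mono' hFm.aestronglyMeasurable
      (ae_of_all _ fun p => ?_)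
    simp only [Function.uncurry, F, one_mul, norm_indicator_eq_indicator_norm]
    exact indicator_le_self' (fun _ _ => norm_nonneg _) _
  calc ∫ s in Ioc a b, ∫ u in s..s + δ, g u
      = ∫ s in Ioc a b, ∫ u in Ioc a (b + δ), F s u := by
        refine setIntegral_congr_fun measurableSet_Ioc fun s hs => ?_
        rw [intervalIntegral.integral_of_le (by linarith), setIntegral_indicator measurableSet_Ioc,
          inter_eq_right.2 (Ioc_subset_Ioc (le_of_lt hs.1) (by linarith [hs.2]))]
    _ = ∫ u in Ioc a (b + δ), ∫ s in Ioc a b, F s u := integral_integral_swap hFi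
    _ = ∫ u in Ioc a (b + δ), volume.real (Ioc a b ∩ Ico (u - δ) u) * g u := by
        simp only [hF_eq, setIntegral_indicator measurableSet_Ico, setIntegral_const, smul_eq_mul,
          Set.inter_comm]

theorem volume_real_window_inter {t δ u : ℝ} (hu : u ∈ Ioc (t - δ) (t + δ)) :
    volume.real (Ioc (t - δ) t ∩ Ico (u - δ) u) = δ - |u - t| := by
  obtain ⟨hu₁, hu₂⟩ := hu
  rcases le_or_gt u t with hut | htu
  · have : Ioc (t - δ) t ∩ Ico (u - δ) u = Ioo (t - δ) u := by
      ext s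
      simp only [mem_inter_iff, Set.mem_Ioc, Set.mem_Ico, Set.mem_Ioo]
      constructor
      · rintro ⟨⟨h₁, -⟩, -, h₂⟩; exact ⟨h₁, h₂⟩
      · rintro ⟨h₁, h₂⟩; exact ⟨⟨h₁, by linarith⟩, by linarith, h₂⟩
    rw [this, Real.volume_real_Ioo_of_le hu₁.le, abs_of_nonpos (by linarith)]
    ring
  · have : Ioc (t - δ) t ∩ Ico (u - δ) u = Icc (u - δ) t := by
      ext s
      simp only [mem_inter_iff, Set.mem_Ioc, Set.mem_Ico, Set.mem_Icc]
      constructor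
      · rintro ⟨⟨-, h₂⟩, h₁, -⟩; exact ⟨h₁, h₂⟩
      · rintro ⟨h₁, h₂⟩; exact ⟨⟨by linarith, h₂⟩, h₁, by linarith⟩
    rw [this, Real.volume_real_Icc_of_le (by linarith), abs_of_pos (by linarith)]
    ring

theorem integral_window_integral_eq {g : ℝ → ℝ} (hg : Measurable g) {t δ : ℝ} (hδ : 0 ≤ δ)
    (hgi : IntegrableOn g (Ioc (t - δ) (t + δ))) :
    ∫ s in (t - δ)..t, ∫ u in s..s + δ, g u =
      (∫ u in (t - δ)..t, (u - t + δ) * g u) + ∫ u in t..t + δ, (t - u + δ) * g u := by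
  have hsplit : Ioc (t - δ) (t + δ) = Ioc (t - δ) t ∪ Ioc t (t + δ) :=
    (Set.Ioc_union_Ioc_eq_Ioc (by linarith) (by linarith)).symm
  have htri : IntegrableOn (fun u => (δ - |u - t|) * g u) (Ioc (t - δ) (t + δ)) := by
    refine hgi.bdd_mul (c := δ) (by fun_prop) ?_
    filter_upwards [ae_restrict_mem measurableSet_Ioc] with u hu
    rw [Real.norm_eq_abs, abs_le]
    constructor <;> cases abs_cases (u - t) <;> linarith [hu.1, hu.2]
  calc ∫ s in (t - δ)..t, ∫ u in s..s + δ, g u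
      = ∫ u in Ioc (t - δ) (t + δ), (δ - |u - t|) * g u := by
        rw [intervalIntegral.integral_of_le (by linarith),
          setIntegral_window_integral hg hδ hgi]
        exact setIntegral_congr_fun measurableSet_Ioc fun u hu => by
          rw [volume_real_window_inter hu]
    _ = (∫ u in Ioc (t - δ) t, (δ - |u - t|) * g u) +
          ∫ u in Ioc t (t + δ), (δ - |u - t|) * g u := by
        rw [hsplit] at htri ⊢
        exact setIntegral_union (Set.Ioc_disjoint_Ioc_of_le le_rfl) measurableSet_Ioc
          (htri.mono_set subset_union_left) (htri.mono_set subset_union_right)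
    _ = _ := by
        rw [intervalIntegral.integral_of_le (by linarith),
          intervalIntegral.integral_of_le (by linarith)]
        congr 1 <;> refine setIntegral_congr_fun measurableSet_Ioc fun u hu => ?_
        · rw [abs_of_nonpos (by linarith [hu.2])]; ring
        · rw [abs_of_pos (by linarith [hu.1])]; ring

end Window

noncomputable def pathIntegral {ι : Type*} (Y : ℝ → Ω → ι → ℝ) (a b : ℝ) (ω : Ω) : ι → ℝ :=
  fun i => ∫ s in a..b, Y s ω i

theorem pathIntegral_eq_integral {ι : Type*} (Y : ℝ → Ω → ι → ℝ) {a b : ℝ} (hab : a ≤ b) :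
    pathIntegral Y a b = fun ω i => ∫ s, Y s ω i ∂(volume.restrict (Set.Ioc a b)) := by
  funext ω i
  exact intervalIntegral.integral_of_le hab

section StationaryCrossMoment

variable [MeasurableSpace Ω] {μ : Measure Ω} {ι : Type*} {Y : ℝ → Ω → ι → ℝ}
  {γ : ℝ → Matrix ι ι ℝ}

theorem integral_sq_apply_eq_of_crossMoment (hγ : ∀ a b, crossMoment μ (Y a) (Y b) = γ (a - b))
    (s : ℝ) (i : ι) : ∫ ω, Y s ω i ^ 2 ∂μ = γ 0 i i := by
  rw [← sub_self s, ← hγ]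
  simp only [sq]
  rfl

theorem measurable_apply_of_crossMoment [SFinite μ] (hY : Measurable (Function.uncurry Y))
    (hγ : ∀ a b, crossMoment μ (Y a) (Y b) = γ (a - b)) (i j : ι) :
    Measurable fun u => γ u i j := by
  have hγu : (fun u => γ u i j) = fun u => ∫ ω, Y u ω i * Y 0 ω j ∂μ := by
    funext u
    rw [← sub_zero u, ← hγ, sub_zero]
    rfl
  rw [hγu]
  exact (StronglyMeasurable.integral_prod_right (((measurable_pi_apply i).comp hY).mul
    ((measurable_pi_apply j).comp ((hY.comp measurable_prodMk_left).comp measurable_snd))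
    ).stronglyMeasurable).measurable

variable [Fintype ι]

theorem abs_apply_le_of_crossMoment (hY2 : ∀ s, MemLp (Y s) 2 μ)
    (hγ : ∀ a b, crossMoment μ (Y a) (Y b) = γ (a - b)) (u : ℝ) (i j : ι) :
    |γ u i j| ≤ (γ 0 i i + γ 0 j j) / 2 := by
  rw [← sub_zero u, ← hγ, ← integral_sq_apply_eq_of_crossMoment hγ u i,
    ← integral_sq_apply_eq_of_crossMoment hγ 0 j, ← integral_add ((hY2 u).eval i).integrable_sq
      ((hY2 0).eval j).integrable_sq, ← integral_div]
  refine (abs_integral_le_integral_abs).trans (integral_mono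
    ((hY2 u).integrable_mul_apply (hY2 0) i j).abs
    ((((hY2 u).eval i).integrable_sq.add ((hY2 0).eval j).integrable_sq).div_const 2) fun ω => ?_)
  rw [abs_mul]
  nlinarith [two_mul_le_add_sq |Y u ω i| |Y 0 ω j|, sq_abs (Y u ω i), sq_abs (Y 0 ω j)]

variable [SFinite μ]

theorem memLp_pathIntegral (hY : Measurable (Function.uncurry Y)) (hY2 : ∀ s, MemLp (Y s) 2 μ)
    (hγ : ∀ a b, crossMoment μ (Y a) (Y b) = γ (a - b)) {a b : ℝ} (hab : a ≤ b) :
    MemLp (pathIntegral Y a b) 2 μ := by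
  rw [pathIntegral_eq_integral Y hab]
  exact memLp_two_integral_pi _ hY hY2 fun s i => (integral_sq_apply_eq_of_crossMoment hγ s i).le

theorem crossMoment_integral_integral_of_stationary (ν₁ ν₂ : Measure ℝ) [IsFiniteMeasure ν₁]
    [IsFiniteMeasure ν₂] (hY : Measurable (Function.uncurry Y)) (hY2 : ∀ s, MemLp (Y s) 2 μ)
    (hγ : ∀ a b, crossMoment μ (Y a) (Y b) = γ (a - b)) :
    crossMoment μ (fun ω i => ∫ s, Y s ω i ∂ν₁) (fun ω j => ∫ v, Y v ω j ∂ν₂) =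
      Matrix.of fun i j => ∫ s, ∫ v, γ (s - v) i j ∂ν₂ ∂ν₁ := by
  simp only [crossMoment_integral_integral ν₁ ν₂ hY hY2
    fun s i => (integral_sq_apply_eq_of_crossMoment hγ s i).le, hγ]

theorem crossMoment_pathIntegral_pathIntegral (hY : Measurable (Function.uncurry Y))
    (hY2 : ∀ s, MemLp (Y s) 2 μ) (hγ : ∀ a b, crossMoment μ (Y a) (Y b) = γ (a - b))
    {a b c d : ℝ} (hab : a ≤ b) (hcd : c ≤ d) :
    crossMoment μ (pathIntegral Y a b) (pathIntegral Y c d) =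
      Matrix.of fun i j => ∫ s in a..b, ∫ v in c..d, γ (s - v) i j := by
  simp only [pathIntegral_eq_integral Y hab, pathIntegral_eq_integral Y hcd,
    crossMoment_integral_integral_of_stationary _ _ hY hY2 hγ, intervalIntegral.integral_of_le hab,
    intervalIntegral.integral_of_le hcd]

theorem crossMoment_apply_pathIntegral (hY : Measurable (Function.uncurry Y))
    (hY2 : ∀ s, MemLp (Y s) 2 μ) (hγ : ∀ a b, crossMoment μ (Y a) (Y b) = γ (a - b))
    (a : ℝ) {c d : ℝ} (hcd : c ≤ d) :
    crossMoment μ (Y a) (pathIntegral Y c d) =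
      Matrix.of fun i j => ∫ v in c..d, γ (a - v) i j := by
  have hYa : Y a = fun ω i => ∫ s, Y s ω i ∂(Measure.dirac a) := by
    simp only [integral_dirac]
  rw [hYa, pathIntegral_eq_integral Y hcd,
    crossMoment_integral_integral_of_stationary _ _ hY hY2 hγ]
  simp only [integral_dirac, intervalIntegral.integral_of_le hcd]

theorem crossMoment_pathIntegral_apply (hY : Measurable (Function.uncurry Y))
    (hY2 : ∀ s, MemLp (Y s) 2 μ) (hγ : ∀ a b, crossMoment μ (Y a) (Y b) = γ (a - b))
    {a b : ℝ} (hab : a ≤ b) (c : ℝ) :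
    crossMoment μ (pathIntegral Y a b) (Y c) =
      Matrix.of fun i j => ∫ s in a..b, γ (s - c) i j := by
  have hYc : Y c = fun ω i => ∫ s, Y s ω i ∂(Measure.dirac c) := by
    simp only [integral_dirac]
  rw [hYc, pathIntegral_eq_integral Y hab,
    crossMoment_integral_integral_of_stationary _ _ hY hY2 hγ]
  simp only [integral_dirac, intervalIntegral.integral_of_le hab]

theorem crossMoment_pathIntegral_window (hY : Measurable (Function.uncurry Y))
    (hY2 : ∀ s, MemLp (Y s) 2 μ) (hγ : ∀ a b, crossMoment μ (Y a) (Y b) = γ (a - b))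
    (t : ℝ) {δ : ℝ} (hδ : 0 ≤ δ) :
    crossMoment μ (pathIntegral Y (t - δ) t) (pathIntegral Y (-δ) 0) =
      Matrix.of fun i j => (∫ u in (t - δ)..t, (u - t + δ) * γ u i j) +
        ∫ u in t..t + δ, (t - u + δ) * γ u i j := by
  rw [crossMoment_pathIntegral_pathIntegral hY hY2 hγ (by linarith) (by linarith)]
  ext i j
  simp only [Matrix.of_apply, intervalIntegral.integral_comp_sub_left (fun u => γ u i j),
    sub_zero, sub_neg_eq_add]
  refine integral_window_integral_eq (measurable_apply_of_crossMoment hY hγ i j) hδ ?_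
  exact Measure.integrableOn_of_bounded measure_Ioc_lt_top.ne
    (measurable_apply_of_crossMoment hY hγ i j).aestronglyMeasurable
    (ae_of_all _ fun u => (abs_apply_le_of_crossMoment hY2 hγ u i j))

end StationaryCrossMoment

section Langevin

variable [MeasurableSpace Ω] {μ : Measure Ω} [SFinite μ] {ι : Type*} [Fintype ι]
  {Y : ℝ → Ω → ι → ℝ} {γ : ℝ → Matrix ι ι ℝ}

theorem crossMoment_langevin_increment (hY : Measurable (Function.uncurry Y))
    (hY2 : ∀ s, MemLp (Y s) 2 μ) (hγ : ∀ a b, crossMoment μ (Y a) (Y b) = γ (a - b))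
    (H : Matrix ι ι ℝ) (t : ℝ) {δ : ℝ} (hδ : 0 ≤ δ) :
    crossMoment μ (Y t - Y (t - δ) + fun ω => H *ᵥ pathIntegral Y (t - δ) t ω)
        (Y 0 - Y (-δ) + fun ω => H *ᵥ pathIntegral Y (-δ) 0 ω) =
      (2 : ℝ) • γ t - γ (t + δ) - γ (t - δ)
        + ((Matrix.of fun i j => ∫ s in t..(t + δ), γ s i j)
            - (Matrix.of fun i j => ∫ s in (t - δ)..t, γ s i j)) * Hᵀ
        + H * ((Matrix.of fun i j => ∫ s in (t - δ)..t, γ s i j)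
            - (Matrix.of fun i j => ∫ s in t..(t + δ), γ s i j))
        + H * ((Matrix.of fun i j => ∫ s in (t - δ)..t, (s - t + δ) * γ s i j)
            + (Matrix.of fun i j => ∫ s in t..(t + δ), (t - s + δ) * γ s i j)) * Hᵀ := by
  have hIt := memLp_pathIntegral hY hY2 hγ (by linarith : t - δ ≤ t)
  have hI0 := memLp_pathIntegral hY hY2 hγ (by linarith : -δ ≤ 0)
  have hΔt := (hY2 t).sub (hY2 (t - δ))
  have hΔ0 := (hY2 0).sub (hY2 (-δ))
  rw [crossMoment_add_left hΔt (hIt.const_mulVec H) (hΔ0.add (hI0.const_mulVec H)),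
    crossMoment_add_right hΔt hΔ0 (hI0.const_mulVec H),
    crossMoment_add_right (hIt.const_mulVec H) hΔ0 (hI0.const_mulVec H),
    crossMoment_mulVec_right hΔt hI0, crossMoment_mulVec_left hIt hΔ0,
    crossMoment_mulVec_left hIt (hI0.const_mulVec H), crossMoment_mulVec_right hIt hI0,
    crossMoment_sub_left (hY2 t) (hY2 _) hΔ0, crossMoment_sub_right (hY2 t) (hY2 0) (hY2 _),
    crossMoment_sub_right (hY2 _) (hY2 0) (hY2 _), crossMoment_sub_left (hY2 t) (hY2 _) hI0,
    crossMoment_sub_right hIt (hY2 0) (hY2 _), hγ, hγ, hγ, hγ,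
    crossMoment_apply_pathIntegral hY hY2 hγ t (by linarith),
    crossMoment_apply_pathIntegral hY hY2 hγ (t - δ) (by linarith),
    crossMoment_pathIntegral_apply hY hY2 hγ (by linarith) 0,
    crossMoment_pathIntegral_apply hY hY2 hγ (by linarith) (-δ),
    crossMoment_pathIntegral_window hY hY2 hγ t hδ]
  have hshift : ∀ c : ℝ, (Matrix.of fun i j => ∫ v in (-δ)..0, γ (c - v) i j) =
      Matrix.of fun i j => ∫ s in c..(c + δ), γ s i j := by
    intro c
    ext i j
    simp only [Matrix.of_apply, intervalIntegral.integral_comp_sub_left (fun u => γ u i j),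
      sub_zero, sub_neg_eq_add]
  have hshift' : (Matrix.of fun i j => ∫ s in (t - δ)..t, γ (s + δ) i j) =
      Matrix.of fun i j => ∫ s in t..(t + δ), γ s i j := by
    ext i j
    simp only [Matrix.of_apply, intervalIntegral.integral_comp_add_right (fun u => γ u i j),
      sub_add_cancel]
  have hwindow : (Matrix.of fun i j => (∫ u in (t - δ)..t, (u - t + δ) * γ u i j) +
      ∫ u in t..t + δ, (t - u + δ) * γ u i j) =
      (Matrix.of fun i j => ∫ s in (t - δ)..t, (s - t + δ) * γ s i j) +
        Matrix.of fun i j => ∫ s in t..(t + δ), (t - s + δ) * γ s i j := rfl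
  simp only [hshift, sub_zero, sub_neg_eq_add, hshift', sub_add_cancel, hwindow]
  rw [mul_assoc H _ Hᵀ]
  module

end Langevin

theorem exists_continuous_modification [MeasurableSpace Ω] {μ : Measure Ω} {T E : Type*}
    [TopologicalSpace T] [TopologicalSpace E] [MeasurableSpace E] [Zero E] {X : T → Ω → E}
    (hX : ∀ t, Measurable (X t)) (hc : ∀ᵐ ω ∂μ, Continuous fun t => X t ω) :
    ∃ Y : T → Ω → E, (∀ t, Measurable (Y t)) ∧ (∀ ω, Continuous fun t => Y t ω) ∧
      ∀ᵐ ω ∂μ, ∀ t, X t ω = Y t ω := by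
  classical
  obtain ⟨N, hN, hNm, hN0⟩ := exists_measurable_superset_of_null (ae_iff.mp hc)
  refine ⟨fun t ω => if ω ∈ N then 0 else X t ω,
    fun t => Measurable.ite hNm measurable_const (hX t), fun ω => ?_,
    (measure_eq_zero_iff_ae_notMem.mp hN0).mono fun ω hω t => by simp [hω]⟩
  by_cases hω : ω ∈ N
  · simpa [hω] using continuous_const
  · simpa [hω] using not_not.mp fun h => hω (hN h)

theorem langevin_noise_sub {ι : Type*} [Fintype ι] (H : Matrix ι ι ℝ) {x : ℝ → ι → ℝ}
    (hx : Continuous x) (a b : ℝ) :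
    (x a - x 0 + H *ᵥ fun i => ∫ s in (0 : ℝ)..a, x s i) -
        (x b - x 0 + H *ᵥ fun i => ∫ s in (0 : ℝ)..b, x s i) =
      x a - x b + H *ᵥ fun i => ∫ s in b..a, x s i := by
  have hsub : ((fun i => ∫ s in (0 : ℝ)..a, x s i) - fun i => ∫ s in (0 : ℝ)..b, x s i) =
      fun i => ∫ s in b..a, x s i := by
    funext i
    have hxi : Continuous fun s => x s i := (continuous_apply i).comp hx
    exact intervalIntegral.integral_interval_sub_left (hxi.intervalIntegrable _ _)
      (hxi.intervalIntegrable _ _)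
  rw [← hsub, Matrix.mulVec_sub]
  abel

theorem stmt16_general {n : ℕ} [MeasurableSpace Ω] (μ : Measure Ω) [IsProbabilityMeasure μ]
    (H : Matrix (Fin n) (Fin n) ℝ) (hH : H.PosDef)
    (X : ℝ → Ω → (Fin n → ℝ))
    (hmX : ∀ t, Measurable (X t))
    (hpaths : ∀ᵐ ω ∂μ, Continuous fun s => X s ω)
    (hL2X : ∀ (t : ℝ) (i : Fin n), MemLp (fun ω => X t ω i) 2 μ)
    (γ : ℝ → Matrix (Fin n) (Fin n) ℝ)
    (hγshift : ∀ a b : ℝ,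
      (Matrix.of fun i j => ∫ ω, X a ω i * X b ω j ∂μ) = γ (a - b))
    (G : ℝ → Ω → (Fin n → ℝ))
    (hG : ∀ (t : ℝ) (ω : Ω), G t ω =
      X t ω - X 0 ω + H.mulVec (fun i => ∫ s in (0 : ℝ)..t, X s ω i))
    (r : ℝ → ℝ → Matrix (Fin n) (Fin n) ℝ)
    (hr : ∀ (δ t : ℝ), r δ t = Matrix.of fun i j =>
      ∫ ω, (G t ω - G (t - δ) ω) i * (G 0 ω - G (-δ) ω) j ∂μ) :
    ∀ (t δ : ℝ), 0 < δ →
      r δ t = (2 : ℝ) • γ t - γ (t + δ) - γ (t - δ)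
        + ((Matrix.of fun i j => ∫ s in t..(t + δ), γ s i j)
            - (Matrix.of fun i j => ∫ s in (t - δ)..t, γ s i j)) * H
        + H * ((Matrix.of fun i j => ∫ s in (t - δ)..t, γ s i j)
            - (Matrix.of fun i j => ∫ s in t..(t + δ), γ s i j))
        + H * ((Matrix.of fun i j => ∫ s in (t - δ)..t, (s - t + δ) * γ s i j)
            + (Matrix.of fun i j => ∫ s in t..(t + δ), (t - s + δ) * γ s i j)) * H := by
  intro t δ hδ
  obtain ⟨Y, hYm, hYc, hXY⟩ := exists_continuous_modification hmX hpaths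
  have hY : Measurable (Function.uncurry Y) :=
    measurable_uncurry_of_continuous_of_measurable hYc hYm
  have hXY' : ∀ s, X s =ᵐ[μ] Y s := fun s => hXY.mono fun ω hω => hω s
  have hY2 : ∀ s, MemLp (Y s) 2 μ := fun s => (memLp_pi_iff.2 (hL2X s)).ae_eq (hXY' s)
  have hγY : ∀ a b, crossMoment μ (Y a) (Y b) = γ (a - b) := fun a b =>
    (crossMoment_congr_ae (hXY' a) (hXY' b)).symm.trans (hγshift a b)
  have hΔG : ∀ a b, (fun ω => G a ω - G b ω) =ᵐ[μ]
      Y a - Y b + fun ω => H *ᵥ pathIntegral Y b a ω := fun a b => by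
    filter_upwards [hXY] with ω hω
    simp only [hG, hω]
    exact langevin_noise_sub H (hYc ω) a b
  have hHT : Hᵀ = H := (Matrix.conjTranspose_eq_transpose_of_trivial H).symm.trans hH.1
  calc r δ t = crossMoment μ (fun ω => G t ω - G (t - δ) ω) (fun ω => G 0 ω - G (-δ) ω) := hr δ t
    _ = _ := by
      rw [crossMoment_congr_ae (hΔG t (t - δ)) (hΔG 0 (-δ)),
        crossMoment_langevin_increment hY hY2 hγY H t hδ.le, hHT]

/-- for a centred square-integrable strictly stationary `X` with
a.s. continuous paths and autocovariance `γ`, the noise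
`G_t = X_t − X_0 + H ∫_0^t X_s ds` of the integrated Langevin equation satisfies,
for all `t ∈ ℝ` and `δ > 0`,
`r_δ(t) = 2γ(t) − γ(t+δ) − γ(t−δ) + (∫_t^{t+δ}γ − ∫_{t−δ}^tγ) H +
H (∫_{t−δ}^tγ − ∫_t^{t+δ}γ) + H (∫_{t−δ}^t (s−t+δ)γ(s)ds + ∫_t^{t+δ} (t−s+δ)γ(s)ds) H`,
where `r_δ(t) = E[(Δ_t^δ G)(Δ_0^δ G)ᵀ]`. -/
theorem stmt16 {n : ℕ} [MeasurableSpace Ω] (μ : Measure Ω) [IsProbabilityMeasure μ]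
    (H : Matrix (Fin n) (Fin n) ℝ) (hH : H.PosDef)
    (X : ℝ → Ω → (Fin n → ℝ))
    (hmX : ∀ t, Measurable (X t))
    (hpaths : ∀ᵐ ω ∂μ, Continuous fun s => X s ω)
    (hX : IsStationaryR μ X)
    (hcent : ∀ (t : ℝ) (i : Fin n), ∫ ω, X t ω i ∂μ = 0)
    (hL2X : ∀ (t : ℝ) (i : Fin n), MemLp (fun ω => X t ω i) 2 μ)
    (γ : ℝ → Matrix (Fin n) (Fin n) ℝ)
    (hγ : ∀ t : ℝ, γ t = Matrix.of fun i j => ∫ ω, X t ω i * X 0 ω j ∂μ)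
    (hγshift : ∀ a b : ℝ,
      (Matrix.of fun i j => ∫ ω, X a ω i * X b ω j ∂μ) = γ (a - b))
    (G : ℝ → Ω → (Fin n → ℝ))
    (hG : ∀ (t : ℝ) (ω : Ω), G t ω =
      X t ω - X 0 ω + H.mulVec (fun i => ∫ s in (0 : ℝ)..t, X s ω i))
    (r : ℝ → ℝ → Matrix (Fin n) (Fin n) ℝ)
    (hr : ∀ (δ t : ℝ), r δ t = Matrix.of fun i j =>
      ∫ ω, (G t ω - G (t - δ) ω) i * (G 0 ω - G (-δ) ω) j ∂μ) :
    ∀ (t δ : ℝ), 0 < δ →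
      r δ t = (2 : ℝ) • γ t - γ (t + δ) - γ (t - δ)
        + ((Matrix.of fun i j => ∫ s in t..(t + δ), γ s i j)
            - (Matrix.of fun i j => ∫ s in (t - δ)..t, γ s i j)) * H
        + H * ((Matrix.of fun i j => ∫ s in (t - δ)..t, γ s i j)
            - (Matrix.of fun i j => ∫ s in t..(t + δ), γ s i j))
        + H * ((Matrix.of fun i j => ∫ s in (t - δ)..t, (s - t + δ) * γ s i j)
            + (Matrix.of fun i j => ∫ s in t..(t + δ), (t - s + δ) * γ s i j)) * H :=
  stmt16_general μ H hH X hmX hpaths hL2X γ hγshift G hG r hr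
end
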